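/- arXiv:math/0012001 — 2 statements merged into one kernel-verified Lean document; each statement's English description precedes it below -/
import Mathlib

section
/- Let A be the presented group on two generators x, y with the single relator y⁻¹·x⁻¹·x⁻¹·x⁻¹·y⁻¹·x·y·y·x, and let B be the presented group on two generators x, z with the single relator x⁻¹·z·x·z⁻¹·x⁻¹·x⁻¹·z⁻¹·x·z. Then A and B are isomorphic as groups. -/
/-- Relator for the SnapPea presentation of the figure-eight knot group:
generators `x = of 0`, `y = of 1`, relator `y⁻¹·x⁻¹·x⁻¹·x⁻¹·y⁻¹·x·y·y·x`. -/
def relA : FreeGroup (Fin 2) :=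
  let x := FreeGroup.of 0
  let y := FreeGroup.of 1
  y⁻¹ * x⁻¹ * x⁻¹ * x⁻¹ * y⁻¹ * x * y * y * x

/-- Relator for Kawauchi's presentation of the figure-eight knot group:
generators `x = of 0`, `z = of 1`, relator `x⁻¹·z·x·z⁻¹·x⁻¹·x⁻¹·z⁻¹·x·z`. -/
def relB : FreeGroup (Fin 2) :=
  let x := FreeGroup.of 0
  let z := FreeGroup.of 1
  x⁻¹ * z * x * z⁻¹ * x⁻¹ * x⁻¹ * z⁻¹ * x * z

namespace FigEight

abbrev A := PresentedGroup ({relA} : Set (FreeGroup (Fin 2)))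
abbrev B := PresentedGroup ({relB} : Set (FreeGroup (Fin 2)))

/-- substitution x ↦ x, y ↦ z·x⁻¹ at the free group level -/
def SA : FreeGroup (Fin 2) →* FreeGroup (Fin 2) :=
  FreeGroup.lift fun i =>
    if i = 0 then FreeGroup.of 0 else FreeGroup.of 1 * (FreeGroup.of 0)⁻¹

/-- substitution x ↦ x, z ↦ y·x at the free group level -/
def SB : FreeGroup (Fin 2) →* FreeGroup (Fin 2) :=
  FreeGroup.lift fun i =>
    if i = 0 then FreeGroup.of 0 else FreeGroup.of 1 * FreeGroup.of 0

lemma SA_relA : SA relA =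
    ((FreeGroup.of 0)⁻¹ * FreeGroup.of 1)⁻¹ * relB *
      ((FreeGroup.of 0)⁻¹ * FreeGroup.of 1) := by
  simp only [SA, relA, relB, map_mul, map_inv, FreeGroup.lift_apply_of]
  norm_num
  group

lemma SB_relB : SB relB =
    ((FreeGroup.of 0)⁻¹ * FreeGroup.of 1 * FreeGroup.of 0) * relA *
      ((FreeGroup.of 0)⁻¹ * FreeGroup.of 1 * FreeGroup.of 0)⁻¹ := by
  simp only [SB, relA, relB, map_mul, map_inv, FreeGroup.lift_apply_of]
  norm_num
  group

/-- generator images for A → B : x ↦ x, y ↦ z·x⁻¹ -/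
def fA : Fin 2 → B := fun i => PresentedGroup.mk {relB} (SA (FreeGroup.of i))

/-- generator images for B → A : x ↦ x, z ↦ y·x -/
def fB : Fin 2 → A := fun i => PresentedGroup.mk {relA} (SB (FreeGroup.of i))

lemma mk_eq_one {rels : Set (FreeGroup (Fin 2))} {w : FreeGroup (Fin 2)}
    (h : w ∈ Subgroup.normalClosure rels) : PresentedGroup.mk rels w = 1 :=
  (QuotientGroup.eq_one_iff w).mpr h

lemma lift_fA : FreeGroup.lift fA = (PresentedGroup.mk {relB}).comp SA := by
  apply FreeGroup.ext_hom
  intro i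
  simp [fA]

lemma lift_fB : FreeGroup.lift fB = (PresentedGroup.mk {relA}).comp SB := by
  apply FreeGroup.ext_hom
  intro i
  simp [fB]

lemma hA : ∀ r ∈ ({relA} : Set (FreeGroup (Fin 2))), FreeGroup.lift fA r = 1 := by
  intro r hr
  rw [Set.mem_singleton_iff] at hr
  subst hr
  rw [lift_fA, MonoidHom.comp_apply]
  apply mk_eq_one
  rw [SA_relA]
  have h1 : relB ∈ Subgroup.normalClosure ({relB} : Set (FreeGroup (Fin 2))) :=
    Subgroup.subset_normalClosure rfl
  exact Subgroup.Normal.conj_mem' Subgroup.normalClosure_normal relB h1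
    ((FreeGroup.of 0)⁻¹ * FreeGroup.of 1)

lemma hB : ∀ r ∈ ({relB} : Set (FreeGroup (Fin 2))), FreeGroup.lift fB r = 1 := by
  intro r hr
  rw [Set.mem_singleton_iff] at hr
  subst hr
  rw [lift_fB, MonoidHom.comp_apply]
  apply mk_eq_one
  rw [SB_relB]
  have h1 : relA ∈ Subgroup.normalClosure ({relA} : Set (FreeGroup (Fin 2))) :=
    Subgroup.subset_normalClosure rfl
  exact Subgroup.Normal.conj_mem Subgroup.normalClosure_normal relA h1
    ((FreeGroup.of 0)⁻¹ * FreeGroup.of 1 * FreeGroup.of 0)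

def φA : A →* B := PresentedGroup.toGroup hA
def φB : B →* A := PresentedGroup.toGroup hB

lemma mk_of {rels : Set (FreeGroup (Fin 2))} (i : Fin 2) :
    PresentedGroup.mk rels (FreeGroup.of i) = PresentedGroup.of i := rfl

end FigEight

open FigEight in
theorem stmt_2 :
    Nonempty (PresentedGroup ({relA} : Set (FreeGroup (Fin 2))) ≃*
      PresentedGroup ({relB} : Set (FreeGroup (Fin 2)))) := by
  refine ⟨MonoidHom.toMulEquiv φA φB ?_ ?_⟩
  · apply PresentedGroup.ext
    intro x
    fin_cases x <;>
      simp [φA, φB, PresentedGroup.toGroup.of, fA, fB, SA, SB, mk_of]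
  · apply PresentedGroup.ext
    intro x
    fin_cases x <;>
      simp [φA, φB, PresentedGroup.toGroup.of, fA, fB, SA, SB, mk_of]
end

section
/- Let a = FreeGroup.of 0, b = FreeGroup.of 1, c = FreeGroup.of 2, d = FreeGroup.of 3 in FreeGroup (Fin 4), and let f : FreeGroup (Fin 4) →* FreeGroup (Fin 4) be the homomorphism determined by f(a) = a·c·d·c⁻¹·b⁻¹, f(b) = b·c·d⁻¹·c⁻¹·b·c·d·c⁻¹·b⁻¹, f(c) = b·c·d⁻¹·d⁻¹, and f(d) = d·d·c⁻¹·b⁻¹·d. Let σ = a·b⁻¹·a⁻¹·b·c·d⁻¹·c⁻¹·d. Then f(σ) = σ. -/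
theorem stmt_8
    (a b c d : FreeGroup (Fin 4))
    (ha : a = FreeGroup.of 0) (hb : b = FreeGroup.of 1)
    (hc : c = FreeGroup.of 2) (hd : d = FreeGroup.of 3)
    (f : FreeGroup (Fin 4) →* FreeGroup (Fin 4))
    (hf : f = FreeGroup.lift
      ![a * c * d * c⁻¹ * b⁻¹,
        b * c * d⁻¹ * c⁻¹ * b * c * d * c⁻¹ * b⁻¹,
        b * c * d⁻¹ * d⁻¹,
        d * d * c⁻¹ * b⁻¹ * d])
    (σ : FreeGroup (Fin 4))
    (hσ : σ = a * b⁻¹ * a⁻¹ * b * c * d⁻¹ * c⁻¹ * d) :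
    f σ = σ := by
  subst ha hb hc hd hf hσ
  simp only [map_mul, map_inv, mul_inv_rev, FreeGroup.lift_apply_of,
    Matrix.cons_val_zero, Matrix.cons_val_one, Matrix.head_cons,
    Matrix.cons_val_two, Matrix.tail_cons, Matrix.cons_val_three,
    Matrix.cons_val_fin_one]
  group
end
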